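/- arXiv:2012.07411 — 2 statements merged into one kernel-verified Lean document; each statement's English description precedes it below -/
import Mathlib

section
/- Let ℙ be a commutative group (written multiplicatively, with identity 1) equipped with a commutative and associative binary operation ⊕ over which multiplication distributes (a·(b ⊕ c) = a·b ⊕ a·c). Let B be an n×n integer matrix, y : {1,…,n} → ℙ a coefficient tuple, and k an index. Define the mutated coefficients y' by y'_k = y_k^{−1} and y'_j = y_j · y_k^{[b_{kj}]_+} · (y_k ⊕ 1)^{−b_{kj}} for j ≠ k, and let B' = μ_k(B) be the matrix mutation of B. Then coefficient mutation is an involution: applying the same mutation rule in direction k to the pair (y', B') returns the original tuple y. -/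
/-- Coefficient mutation in a semifield is an involution.

`P` is a commutative multiplicative group equipped with an auxiliary commutative and
associative binary operation `⊕` (denoted `add`) over which multiplication distributes.
Given an `n × n` integer matrix `B`, a coefficient tuple `y : Fin n → P` and a direction
`k`, the mutated data is `y'_k = y_k⁻¹`, `y'_j = y_j * y_k ^ [b_{kj}]₊ * (y_k ⊕ 1) ^ (-b_{kj})`
for `j ≠ k`, together with the matrix mutation `B' = μ_k(B)`.  Applying the same rule to
`(y', B')` in direction `k` returns the original tuple `y`. -/
theorem coefficientMutation_involutive {n : ℕ} (P : Type*) [CommGroup P]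
    (add : P → P → P)
    (hcomm : ∀ a b : P, add a b = add b a)
    (hassoc : ∀ a b c : P, add (add a b) c = add a (add b c))
    (hdistrib : ∀ a b c : P, a * add b c = add (a * b) (a * c))
    (B : Matrix (Fin n) (Fin n) ℤ) (y : Fin n → P) (k : Fin n)
    (B' : Matrix (Fin n) (Fin n) ℤ)
    (hB' : ∀ i j, B' i j =
      if i = k ∨ j = k then -B i j
      else B i j + max (-B i k) 0 * B k j + B i k * max (B k j) 0)
    (y' : Fin n → P)
    (hy' : ∀ j, y' j =
      if j = k then (y k)⁻¹
      else y j * y k ^ (max (B k j) 0) * (add (y k) 1) ^ (-(B k j))) :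
    ∀ j, (if j = k then (y' k)⁻¹
      else y' j * y' k ^ (max (B' k j) 0) * (add (y' k) 1) ^ (-(B' k j))) = y j := by

  intro j
  have hyk : y' k = (y k)⁻¹ := by rw [hy' k]; simp
  by_cases hj : j = k
  · simp [hj, hyk]
  · have hBkj : B' k j = -B k j := by rw [hB' k j]; simp
    have hA : add (y k)⁻¹ 1 = (y k)⁻¹ * add (y k) 1 := by
      rw [hdistrib]; simp [hcomm]
    set b := B k j with hb
    have hmax : max (-b) 0 = max b 0 - b := by omega
    simp only [hj, if_neg, hy' j, hyk, hBkj, hA, neg_neg, hmax]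
    rw [mul_zpow, inv_zpow, inv_zpow]
    set m := max b 0
    set A := add (y k) 1
    set u := y k
    simp only [if_false, ← hb]
    group
    rw [zpow_neg u m, mul_right_comm (y j * u ^ m) (A ^ (-b)), mul_inv_cancel_right,
      zpow_neg A b, mul_assoc, inv_mul_cancel, mul_one]
end

section
/- Let A, B, C, D ∈ ℂ with AD − BC = 1 and let g(z) = (Az + B)/(Cz + D). Let w₊, w₋, ρ ∈ ℂ satisfy Cw₊ + D ≠ 0, Cw₋ + D ≠ 0 and δ := (Cw₊ + D)(Cw₋ + D) − ρC² ≠ 0, and define the transformed parameters w'₊ = ((Aw₊ + B)(Cw₋ + D) − ρAC)/δ, w'₋ = ((Aw₋ + B)(Cw₊ + D) − ρAC)/δ and ρ' = ρ/δ². Then for all z, z' ∈ ℂ with Cz + D ≠ 0 and Cz' + D ≠ 0, the sewing relation (z' − w₋)(z − w₊) = ρ implies (g(z') − w'₋)(g(z) − w'₊) = ρ'. -/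
/-- Equivariance of the Schottky sewing relation under the `SL₂(ℂ)` action.

Let `A D - B C = 1`, `g(z) = (A z + B)/(C z + D)`, and let `wp, wm, ρ` satisfy
`C wp + D ≠ 0`, `C wm + D ≠ 0` and `δ := (C wp + D)(C wm + D) - ρ C² ≠ 0`.  With the
transformed parameters
`wp' = ((A wp + B)(C wm + D) - ρ A C)/δ`,
`wm' = ((A wm + B)(C wp + D) - ρ A C)/δ`,
`ρ' = ρ/δ²`, the sewing relation `(z' - wm)(z - wp) = ρ` implies
`(g z' - wm')(g z - wp') = ρ'` whenever `C z + D ≠ 0` and `C z' + D ≠ 0`. -/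
theorem schottky_sewing_sl2_equivariance (A B C D : ℂ) (hdet : A * D - B * C = 1)
    (g : ℂ → ℂ) (hg : ∀ z, g z = (A * z + B) / (C * z + D))
    (wp wm ρ : ℂ)
    (hwpD : C * wp + D ≠ 0) (hwmD : C * wm + D ≠ 0)
    (δ : ℂ) (hδ : δ = (C * wp + D) * (C * wm + D) - ρ * C ^ 2) (hδ0 : δ ≠ 0)
    (wp' wm' ρ' : ℂ)
    (hwp' : wp' = ((A * wp + B) * (C * wm + D) - ρ * A * C) / δ)
    (hwm' : wm' = ((A * wm + B) * (C * wp + D) - ρ * A * C) / δ)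
    (hρ' : ρ' = ρ / δ ^ 2) :
    ∀ z z' : ℂ, C * z + D ≠ 0 → C * z' + D ≠ 0 →
      (z' - wm) * (z - wp) = ρ →
      (g z' - wm') * (g z - wp') = ρ' := by
  intro z z' hz hz' hsew
  have hczδ : (C * z + D) * δ ≠ 0 := mul_ne_zero hz hδ0
  have hcz'δ : (C * z' + D) * δ ≠ 0 := mul_ne_zero hz' hδ0
  have key1 : (A * z + B) * δ - (C * z + D) * ((A * wp + B) * (C * wm + D) - ρ * A * C)
      = (C * wm + D) * (z - wp) + ρ * C := by
    rw [hδ]; linear_combination ((C * wm + D) * (z - wp) + ρ * C) * hdet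
  have key2 : (A * z' + B) * δ - (C * z' + D) * ((A * wm + B) * (C * wp + D) - ρ * A * C)
      = (C * wp + D) * (z' - wm) + ρ * C := by
    rw [hδ]; linear_combination ((C * wp + D) * (z' - wm) + ρ * C) * hdet
  have h1 : g z - wp' = ((C * wm + D) * (z - wp) + ρ * C) / ((C * z + D) * δ) := by
    rw [hg, hwp', div_sub_div _ _ hz hδ0, key1]
  have h2 : g z' - wm' = ((C * wp + D) * (z' - wm) + ρ * C) / ((C * z' + D) * δ) := by
    rw [hg, hwm', div_sub_div _ _ hz' hδ0, key2]
  rw [h1, h2, hρ', div_mul_div_comm, div_eq_div_iff (mul_ne_zero hcz'δ hczδ) (pow_ne_zero 2 hδ0)]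
  linear_combination (δ ^ 2 * ((C * wp + D) * (C * wm + D) - ρ * C ^ 2)) * hsew
end
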